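/- Let ρ be a positive definite density matrix on ℂ^{d_S} with eigenvalues p_1, …, p_{d_S}, and let |ν⟩ be a unit vector in ℂ^{d_S} ⊗ ℂ^{d_P} whose reduced state on the first factor equals ρ (i.e. Tr_P |ν⟩⟨ν| = ρ). Then ‖[log₂(ρ) ⊗ I_P, |ν⟩⟨ν|]‖₁ ≤ 4·√(∑_{i=1}^{d_S} p_i·(log₂ p_i)²). -/

import Mathlib

open scoped Kronecker ComplexOrder
open Matrix MeasureTheory

noncomputable section

/-- The positive semidefinite square root of a positive semidefinite matrix
(removed from Mathlib; restored with its former definition). -/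
def Matrix.PosSemidef.sqrt {n 𝕜 : Type*} [Fintype n] [DecidableEq n] [RCLike 𝕜]
    {A : Matrix n n 𝕜} (hA : A.PosSemidef) : Matrix n n 𝕜 :=
  hA.1.eigenvectorUnitary.1 * diagonal ((↑) ∘ (√·) ∘ hA.1.eigenvalues) *
  (star hA.1.eigenvectorUnitary : Matrix n n 𝕜)

/-- The trace norm `‖A‖₁ = Tr √(AᴴA)`. -/
def traceNorm {n : Type*} [Fintype n] [DecidableEq n] (A : Matrix n n ℂ) : ℝ :=
  ((Matrix.posSemidef_conjTranspose_mul_self A).sqrt.trace).re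

/-- The operator (spectral) norm `‖A‖_∞`. -/
def opNorm {n : Type*} [Fintype n] [DecidableEq n] (A : Matrix n n ℂ) : ℝ :=
  ‖Matrix.toEuclideanCLM (𝕜 := ℂ) A‖

/-- The partial trace over the second tensor factor. -/
def ptrace2 {m e : Type*} [Fintype e] (ρ : Matrix (m × e) (m × e) ℂ) : Matrix m m ℂ :=
  Matrix.of fun i j => ∑ k, ρ (i, k) (j, k)

/-- The binary logarithm `log₂` of a Hermitian matrix, via the spectral functional
calculus (junk value `0` on non-Hermitian input). -/
def matLog2 {n : Type*} [Fintype n] [DecidableEq n] (A : Matrix n n ℂ) : Matrix n n ℂ :=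
  if hA : A.IsHermitian then hA.cfc (Real.logb 2) else 0

/-- The commutator `[A, B] = A·B − B·A`. -/
def mcomm {n : Type*} [Fintype n] (A B : Matrix n n ℂ) : Matrix n n ℂ :=
  A * B - B * A

/-!
Write `P = |ν⟩⟨ν|` and `L = log₂ ρ ⊗ I`. Since `L` is Hermitian,
`[L, P] = |w⟩⟨ν| - |ν⟩⟨w|` with `w = Lν - ⟨ν, Lν⟩ν ⊥ ν`. For such a matrix
`|[L, P]| = ‖w‖ P + ‖w‖⁻¹ |w⟩⟨w|`, so its trace norm is `2‖w‖ ≤ 2‖Lν‖`. Finally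
`‖Lν‖² = Tr((log₂ ρ)² Tr_P P) = Tr((log₂ ρ)² ρ) = ∑ pᵢ (log₂ pᵢ)²` because `ν` purifies `ρ`.
-/

section Projection

variable {n 𝕜 : Type*} [Fintype n] [RCLike 𝕜]

lemma ofReal_re_dotProduct_star_self (u : n → 𝕜) :
    ((RCLike.re (star u ⬝ᵥ u) : ℝ) : 𝕜) = star u ⬝ᵥ u := by
  obtain ⟨x, -, hx⟩ := RCLike.nonneg_iff_exists_ofReal.mp (dotProduct_star_self_nonneg u)
  rw [← hx, RCLike.ofReal_re]

variable {v : n → 𝕜} (hv : star v ⬝ᵥ v = 1) (u : n → 𝕜)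
include hv

lemma dotProduct_sub_smul_proj_eq_zero : star v ⬝ᵥ (u - (star v ⬝ᵥ u) • v) = 0 := by
  rw [dotProduct_sub, dotProduct_smul, hv, smul_eq_mul, mul_one, sub_self]

lemma re_dotProduct_sub_smul_proj_le :
    RCLike.re (star (u - (star v ⬝ᵥ u) • v) ⬝ᵥ (u - (star v ⬝ᵥ u) • v)) ≤
      RCLike.re (star u ⬝ᵥ u) := by
  set α := star v ⬝ᵥ u
  have hwv : star (u - α • v) ⬝ᵥ v = 0 := by
    rw [star_dotProduct, dotProduct_sub_smul_proj_eq_zero hv, star_zero]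
  have pythagoras : star (u - α • v) ⬝ᵥ (u - α • v) = star u ⬝ᵥ u - star α * α := by
    rw [dotProduct_sub, dotProduct_smul, hwv, smul_zero, sub_zero, star_sub, star_smul,
      sub_dotProduct, smul_dotProduct, smul_eq_mul]
  rw [pythagoras, map_sub, sub_le_self_iff, RCLike.star_def, RCLike.conj_mul]
  exact_mod_cast sq_nonneg ‖α‖

end Projection

lemma Matrix.IsHermitian.mcomm_vecMulVec_star_self {n : Type*} [Fintype n]
    {L : Matrix n n ℂ} (hL : L.IsHermitian) (v : n → ℂ) :
    mcomm L (vecMulVec v (star v)) =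
      vecMulVec (L *ᵥ v - (star v ⬝ᵥ L *ᵥ v) • v) (star v) -
        vecMulVec v (star (L *ᵥ v - (star v ⬝ᵥ L *ᵥ v) • v)) := by
  have hLv : star (L *ᵥ v) = star v ᵥ* L := by rw [star_mulVec, hL.eq]
  have hreal : star (star v ⬝ᵥ L *ᵥ v) = star v ⬝ᵥ L *ᵥ v := by
    rw [← star_dotProduct, hLv, dotProduct_mulVec]
  rw [mcomm, mul_vecMulVec, vecMulVec_mul, ← hLv, star_sub, star_smul, hreal, sub_vecMulVec,
    vecMulVec_sub, smul_vecMulVec, vecMulVec_smul]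
  abel

section TraceNorm

variable {n : Type*} [Fintype n] [DecidableEq n]

open scoped MatrixOrder in
lemma Matrix.PosSemidef.eq_sqrt_of_sq_eq {A B : Matrix n n ℂ} (hB : B.PosSemidef)
    (hA : A.PosSemidef) (hAB : B ^ 2 = A) : B = hA.sqrt := by
  have h1 : hA.sqrt = cfc Real.sqrt A := by rw [hA.1.cfc_eq]; rfl
  rw [h1, ← cfcₙ_eq_cfc, ← CFC.sqrt_eq_real_sqrt A hA.nonneg,
    CFC.sqrt_unique (by rw [← sq]; exact hAB) hB.nonneg]

lemma traceNorm_eq_re_trace_of_sq_eq {A B : Matrix n n ℂ} (hB : B.PosSemidef)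
    (h : B ^ 2 = Aᴴ * A) : traceNorm A = B.trace.re := by
  rw [traceNorm, ← hB.eq_sqrt_of_sq_eq _ h]

variable {u v : n → ℂ} (hv : star v ⬝ᵥ v = 1) (huv : star v ⬝ᵥ u = 0)
include hv huv

omit [DecidableEq n] in
lemma conjTranspose_mul_self_vecMulVec_sub_vecMulVec :
    (vecMulVec u (star v) - vecMulVec v (star u))ᴴ *
        (vecMulVec u (star v) - vecMulVec v (star u)) =
      (star u ⬝ᵥ u) • vecMulVec v (star v) + vecMulVec u (star u) := by
  have hvu : star u ⬝ᵥ v = 0 := by rw [star_dotProduct, huv, star_zero]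
  simp only [conjTranspose_sub, conjTranspose_vecMulVec, star_star, sub_mul, mul_sub,
    vecMulVec_mul_vecMulVec, hv, huv, hvu, zero_smul, vecMulVec_zero, one_smul]
  rw [vecMulVec_smul, sub_zero, zero_sub, sub_neg_eq_add]

lemma traceNorm_vecMulVec_sub_vecMulVec :
    traceNorm (vecMulVec u (star v) - vecMulVec v (star u)) = 2 * √(star u ⬝ᵥ u).re := by
  have hc : ((√(star u ⬝ᵥ u).re ^ 2 : ℝ) : ℂ) = star u ⬝ᵥ u := by
    rw [Real.sq_sqrt (Complex.nonneg_iff.mp (dotProduct_star_self_nonneg u)).1]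
    exact ofReal_re_dotProduct_star_self u
  set c := √(star u ⬝ᵥ u).re
  set P := vecMulVec v (star v)
  set Q := vecMulVec u (star u)
  have hPP : P * P = P := by rw [vecMulVec_mul_vecMulVec, hv, one_smul]
  have hPQ : P * Q = 0 := by rw [vecMulVec_mul_vecMulVec, huv, zero_smul, vecMulVec_zero]
  have hQP : Q * P = 0 := by
    rw [vecMulVec_mul_vecMulVec, star_dotProduct, huv, star_zero, zero_smul, vecMulVec_zero]
  have hQQ : Q * Q = c ^ 2 • Q := by
    rw [vecMulVec_mul_vecMulVec, ← hc, vecMulVec_smul]; rfl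
  have hQ : (c⁻¹ * c⁻¹ * c ^ 2) • Q = Q := by
    rcases eq_or_ne c 0 with h0 | h0
    · have hu : u = 0 := by simpa [h0, eq_comm (a := (0 : ℂ))] using hc
      simp [Q, hu]
    · rw [show c⁻¹ * c⁻¹ * c ^ 2 = 1 by field_simp, one_smul]
  -- `P` and `Q / c²` are orthogonal projections onto orthogonal lines, whence this square root.
  have hB : (c • P + c⁻¹ • Q).PosSemidef :=
    ((posSemidef_vecMulVec_self_star v).smul (Real.sqrt_nonneg _)).add
      ((posSemidef_vecMulVec_self_star u).smul (inv_nonneg.mpr (Real.sqrt_nonneg _)))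
  rw [traceNorm_eq_re_trace_of_sq_eq hB]
  · rw [trace_add, trace_smul, trace_smul, trace_vecMulVec, trace_vecMulVec, dotProduct_comm,
      hv, dotProduct_comm, ← hc]
    simp only [Complex.add_re, Complex.smul_re, Complex.one_re, Complex.ofReal_re, smul_eq_mul]
    rw [sq, ← mul_assoc, inv_mul_mul_self]
    ring
  · rw [conjTranspose_mul_self_vecMulVec_sub_vecMulVec hv huv, ← hc, sq]
    simp only [add_mul, mul_add, smul_mul_smul_comm, hPP, hPQ, hQP, hQQ, smul_zero, add_zero,
      zero_add, smul_smul]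
    rw [hQ, sq]
    rfl

end TraceNorm

section SpectralCalculus

variable {n 𝕜 : Type*} [Fintype n] [DecidableEq n] [RCLike 𝕜] {A : Matrix n n 𝕜}

lemma Matrix.IsHermitian.trace_cfc (hA : A.IsHermitian) (f : ℝ → ℝ) :
    (cfc f A).trace = ∑ i, (f (hA.eigenvalues i) : 𝕜) := by
  rw [hA.cfc_eq, IsHermitian.cfc, Unitary.conjStarAlgAut_apply, trace_mul_cycle,
    Unitary.coe_star_mul_self, one_mul, trace_diagonal]
  rfl

lemma Matrix.IsHermitian.trace_conjTranspose_cfc_mul_cfc_mul (hA : A.IsHermitian) (g : ℝ → ℝ) :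
    ((cfc g A)ᴴ * cfc g A * A).trace =
      ∑ i, ((hA.eigenvalues i * g (hA.eigenvalues i) ^ 2 : ℝ) : 𝕜) := by
  have hcont (f : ℝ → ℝ) : ContinuousOn f (spectrum ℝ A) := A.finite_real_spectrum.continuousOn f
  have hmul : (cfc g A)ᴴ * cfc g A * A = cfc (fun x => x * g x ^ 2) A := by
    simp_rw [mul_comm _ (g _ ^ 2)]
    rw [cfc_mul (fun x => g x ^ 2) (fun x => x) A (hcont _) (hcont _), cfc_pow g 2 A (hcont g),
      cfc_id' ℝ A, ← star_eq_conjTranspose, (cfc_predicate g A).star_eq, sq]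
  rw [hmul, hA.trace_cfc]

end SpectralCalculus

section PartialTrace

variable {m e : Type*} [Fintype m] [Fintype e] [DecidableEq e]

lemma trace_kronecker_one_mul_eq_trace_mul_ptrace2 (A : Matrix m m ℂ)
    (X : Matrix (m × e) (m × e) ℂ) :
    ((A ⊗ₖ (1 : Matrix e e ℂ)) * X).trace = (A * ptrace2 X).trace := by
  simp only [trace, diag, mul_apply, Fintype.sum_prod_type, kroneckerMap_apply, one_apply,
    mul_ite, mul_one, mul_zero, ite_mul, zero_mul, Finset.sum_ite_eq, Finset.mem_univ, if_true,
    ptrace2, of_apply, Finset.mul_sum]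
  exact Finset.sum_congr rfl fun i _ => Finset.sum_comm

lemma dotProduct_star_kronecker_one_mulVec (A : Matrix m m ℂ) (v : m × e → ℂ) :
    star ((A ⊗ₖ (1 : Matrix e e ℂ)) *ᵥ v) ⬝ᵥ (A ⊗ₖ (1 : Matrix e e ℂ)) *ᵥ v =
      (Aᴴ * A * ptrace2 (vecMulVec v (star v))).trace := by
  rw [star_mulVec, ← dotProduct_mulVec, mulVec_mulVec, conjTranspose_kronecker,
    conjTranspose_one, ← mul_kronecker_mul, one_mul, ← trace_kronecker_one_mul_eq_trace_mul_ptrace2,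
    mul_vecMulVec, trace_vecMulVec, dotProduct_comm]

end PartialTrace

theorem traceNorm_comm_log_purification_le_general {dS dP : ℕ}
    (ρ : Matrix (Fin dS) (Fin dS) ℂ) (hρ : ρ.PosDef)
    (v : Fin dS × Fin dP → ℂ)
    (hunit : ∑ x, Complex.normSq (v x) = 1)
    (hred : ptrace2 (Matrix.of fun x y => v x * star (v y)) = ρ) :
    traceNorm (mcomm (matLog2 ρ ⊗ₖ (1 : Matrix (Fin dP) (Fin dP) ℂ))
        (Matrix.of fun x y => v x * star (v y))) ≤
      4 * Real.sqrt (∑ i, hρ.1.eigenvalues i * (Real.logb 2 (hρ.1.eigenvalues i)) ^ 2) := by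
  have hP : (of fun x y => v x * star (v y)) = vecMulVec v (star v) := rfl
  rw [hP] at hred ⊢
  set S := ∑ i, hρ.1.eigenvalues i * (Real.logb 2 (hρ.1.eigenvalues i)) ^ 2
  set L := matLog2 ρ ⊗ₖ (1 : Matrix (Fin dP) (Fin dP) ℂ)
  have hlog : matLog2 ρ = cfc (Real.logb 2) ρ := by rw [matLog2, dif_pos hρ.1, hρ.1.cfc_eq]
  have hL : L.IsHermitian := by
    have hA : (matLog2 ρ).IsHermitian := hlog ▸ cfc_predicate _ ρ
    rw [IsHermitian, conjTranspose_kronecker, hA.eq, conjTranspose_one]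
  have hv : star v ⬝ᵥ v = 1 := by
    simp only [dotProduct, Pi.star_apply, Complex.star_def, ← Complex.normSq_eq_conj_mul_self]
    exact_mod_cast hunit
  have hS : RCLike.re (star (L *ᵥ v) ⬝ᵥ L *ᵥ v) = S := by
    rw [dotProduct_star_kronecker_one_mulVec, hred, hlog,
      hρ.1.trace_conjTranspose_cfc_mul_cfc_mul, ← RCLike.ofReal_sum, RCLike.ofReal_re]
  set w := L *ᵥ v - (star v ⬝ᵥ L *ᵥ v) • v
  have hw : (star w ⬝ᵥ w).re ≤ S := hS ▸ re_dotProduct_sub_smul_proj_le hv (L *ᵥ v)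
  rw [hL.mcomm_vecMulVec_star_self, traceNorm_vecMulVec_sub_vecMulVec hv
    (dotProduct_sub_smul_proj_eq_zero hv _)]
  linarith [Real.sqrt_le_sqrt hw, Real.sqrt_nonneg S]

/-- For a positive definite density matrix `ρ` with eigenvalues `p i`
and a purification `|ν⟩` of `ρ`, the trace norm of `[log₂(ρ) ⊗ I_P, |ν⟩⟨ν|]` is at most
`4·√(∑ i, p i·(log₂ (p i))²)`. -/
theorem traceNorm_comm_log_purification_le {dS dP : ℕ}
    (ρ : Matrix (Fin dS) (Fin dS) ℂ) (hρ : ρ.PosDef) (htr : ρ.trace = 1)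
    (v : Fin dS × Fin dP → ℂ)
    (hunit : ∑ x, Complex.normSq (v x) = 1)
    (hred : ptrace2 (Matrix.of fun x y => v x * star (v y)) = ρ) :
    traceNorm (mcomm (matLog2 ρ ⊗ₖ (1 : Matrix (Fin dP) (Fin dP) ℂ))
        (Matrix.of fun x y => v x * star (v y))) ≤
      4 * Real.sqrt (∑ i, hρ.1.eigenvalues i * (Real.logb 2 (hρ.1.eigenvalues i)) ^ 2) :=
  traceNorm_comm_log_purification_le_general ρ hρ v hunit hred
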